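/- Let ρ be the density and τ the kernel of a finite-rank projection P = Σₖ|φₖ⟩⟨φₖ| with orthonormal φₖ ∈ L²(ℝ³). Then the direct-minus-exchange operator U_P − K_P ≥ 0, where U_P is multiplication by (ρ * 2/|·|) and (K_P ψ)(x) = ∫(2/|x−y|)τ(x,y)ψ(y)dy. -/

import Mathlib

open MeasureTheory
open scoped ComplexConjugate

/-
Pointwise, the direct-minus-exchange integrand at `(x, y)` plus the one at `(y, x)` is
`(2 / |x - y|) Σₖ |φₖ(y) ψ(x) - φₖ(x) ψ(y)|² ≥ 0`. Since the product measure is invariant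
under `(x, y) ↦ (y, x)`, twice the real part of the integral is the integral of this
nonnegative symmetrization.
-/

/-- The integrand of `⟨ψ, (U_P - K_P) ψ⟩` at `(x, y)`, with `c = 2 / |x - y|`, `a = φ(x)`,
`b = φ(y)`, `u = ψ(x)`, `v = ψ(y)`. -/
noncomputable def directMinusExchange {ι : Type*} [Fintype ι] (c : ℝ) (a b : ι → ℂ)
    (u v : ℂ) : ℂ :=
  (c : ℂ) * ((((∑ k, ‖b k‖ ^ 2) * ‖u‖ ^ 2 : ℝ) : ℂ) - conj u * (∑ k, a k * conj (b k)) * v)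

theorem directMinusExchange_add_swap {ι : Type*} [Fintype ι] (c : ℝ) (a b : ι → ℂ)
    (u v : ℂ) :
    directMinusExchange c a b u v + directMinusExchange c b a v u
      = ((c * ∑ k, ‖b k * u - a k * v‖ ^ 2 : ℝ) : ℂ) := by
  unfold directMinusExchange
  push_cast
  simp only [← Complex.mul_conj', map_sub, map_mul, Finset.mul_sum, Finset.sum_mul, mul_sub]
  rw [← Finset.sum_sub_distrib, ← Finset.sum_sub_distrib, ← Finset.sum_add_distrib]
  exact Finset.sum_congr rfl fun k _ => by ring

theorem re_directMinusExchange_add_swap_nonneg {ι : Type*} [Fintype ι] {c : ℝ} (hc : 0 ≤ c)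
    (a b : ι → ℂ) (u v : ℂ) :
    0 ≤ (directMinusExchange c a b u v).re + (directMinusExchange c b a v u).re := by
  rw [← Complex.add_re, directMinusExchange_add_swap, Complex.ofReal_re]
  positivity

theorem re_integral_nonneg_of_re_add_swap_nonneg {α : Type*} [MeasurableSpace α]
    {μ : Measure α} [SFinite μ] {F : α × α → ℂ} (hF : Integrable F (μ.prod μ))
    (hsymm : ∀ p, 0 ≤ (F p).re + (F p.swap).re) :
    0 ≤ (∫ p, F p ∂μ.prod μ).re := by
  have hre : ∫ p, (F p).re ∂μ.prod μ = (∫ p, F p ∂μ.prod μ).re := by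
    simpa using integral_re hF
  have hre_swap : ∫ p, (F p.swap).re ∂μ.prod μ = (∫ p, F p ∂μ.prod μ).re := by
    rw [integral_prod_swap (fun p => (F p).re), hre]
  have hsum : ∫ p, ((F p).re + (F p.swap).re) ∂μ.prod μ = 2 * (∫ p, F p ∂μ.prod μ).re := by
    rw [integral_add (f := fun p => (F p).re) (g := fun p => (F p.swap).re) hF.re hF.swap.re,
      hre, hre_swap]
    ring
  have hsum_nonneg : 0 ≤ ∫ p, ((F p).re + (F p.swap).re) ∂μ.prod μ := integral_nonneg hsymm
  linarith

theorem stmt14_general (N : ℕ) (φ : Fin N → EuclideanSpace ℝ (Fin 3) → ℂ)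
    (ψ : EuclideanSpace ℝ (Fin 3) → ℂ)
    (hint : Integrable
      (fun p : EuclideanSpace ℝ (Fin 3) × EuclideanSpace ℝ (Fin 3) =>
        ((2 / ‖p.1 - p.2‖ : ℝ) : ℂ) *
          ((((∑ k, ‖φ k p.2‖ ^ 2) * ‖ψ p.1‖ ^ 2 : ℝ) : ℂ)
            - conj (ψ p.1) * (∑ k, φ k p.1 * conj (φ k p.2)) * ψ p.2))
      (volume : Measure (EuclideanSpace ℝ (Fin 3) × EuclideanSpace ℝ (Fin 3)))) :
    0 ≤ (∫ p : EuclideanSpace ℝ (Fin 3) × EuclideanSpace ℝ (Fin 3),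
        ((2 / ‖p.1 - p.2‖ : ℝ) : ℂ) *
          ((((∑ k, ‖φ k p.2‖ ^ 2) * ‖ψ p.1‖ ^ 2 : ℝ) : ℂ)
            - conj (ψ p.1) * (∑ k, φ k p.1 * conj (φ k p.2)) * ψ p.2)).re := by
  change 0 ≤ (∫ p, directMinusExchange (2 / ‖p.1 - p.2‖) (φ · p.1) (φ · p.2) (ψ p.1) (ψ p.2)
    ∂volume.prod volume).re
  rw [Measure.volume_eq_prod] at hint
  refine re_integral_nonneg_of_re_add_swap_nonneg hint fun p => ?_
  rw [Prod.fst_swap, Prod.snd_swap, norm_sub_rev p.2 p.1]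
  exact re_directMinusExchange_add_swap_nonneg (by positivity) _ _ _ _

/-- Let `ρ(x) = Σₖ |φₖ(x)|²` be the density and `τ(x,y) = Σₖ φₖ(x) conj(φₖ(y))` the
kernel of the finite-rank projection `P = Σₖ |φₖ⟩⟨φₖ|` with `(φₖ)` orthonormal in
`L²(ℝ³)`. Then the direct-minus-exchange operator `U_P - K_P` is nonnegative:
`⟨ψ, (U_P - K_P)ψ⟩ ≥ 0` for every `ψ` in its form domain. -/
theorem stmt14 (N : ℕ) (φ : Fin N → EuclideanSpace ℝ (Fin 3) → ℂ)
    (hmem : ∀ k, MemLp (φ k) 2 (volume : Measure (EuclideanSpace ℝ (Fin 3))))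
    (horth : ∀ k l, ∫ x, conj (φ k x) * φ l x
        ∂(volume : Measure (EuclideanSpace ℝ (Fin 3))) = if k = l then 1 else 0)
    (ψ : EuclideanSpace ℝ (Fin 3) → ℂ)
    (hψ : MemLp ψ 2 (volume : Measure (EuclideanSpace ℝ (Fin 3))))
    (hint : Integrable
      (fun p : EuclideanSpace ℝ (Fin 3) × EuclideanSpace ℝ (Fin 3) =>
        ((2 / ‖p.1 - p.2‖ : ℝ) : ℂ) *
          ((((∑ k, ‖φ k p.2‖ ^ 2) * ‖ψ p.1‖ ^ 2 : ℝ) : ℂ)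
            - conj (ψ p.1) * (∑ k, φ k p.1 * conj (φ k p.2)) * ψ p.2))
      (volume : Measure (EuclideanSpace ℝ (Fin 3) × EuclideanSpace ℝ (Fin 3)))) :
    0 ≤ (∫ p : EuclideanSpace ℝ (Fin 3) × EuclideanSpace ℝ (Fin 3),
        ((2 / ‖p.1 - p.2‖ : ℝ) : ℂ) *
          ((((∑ k, ‖φ k p.2‖ ^ 2) * ‖ψ p.1‖ ^ 2 : ℝ) : ℂ)
            - conj (ψ p.1) * (∑ k, φ k p.1 * conj (φ k p.2)) * ψ p.2)).re :=
  stmt14_general N φ ψ hint
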